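/- A properly vertex-colored digraph (G,σ) is binary-explainable if and only if (i) (G,σ) is sf-colored and (ii) the extended triple set R^bin(G,σ) is consistent. -/

import Mathlib

/-- A rooted phylogenetic tree with leaf set `V`, encoded by its hierarchy of clusters
(the cluster of a vertex is the set of leaves below it; inner vertices of a phylogenetic
tree have at least two children, so vertices correspond bijectively to clusters). -/
structure PhyloTree (V : Type*) where
  clusters : Set (Set V)
  nonempty_of_mem : ∀ A ∈ clusters, A.Nonempty
  univ_mem : Set.univ ∈ clusters
  singleton_mem : ∀ v : V, {v} ∈ clusters
  nested : ∀ A ∈ clusters, ∀ B ∈ clusters, A ⊆ B ∨ B ⊆ A ∨ Disjoint A B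

namespace PhyloTree

variable {V : Type*}

/-- The cluster of the last common ancestor of `x` and `y`: the smallest cluster
containing both (the clusters containing `x` and `y` form a chain, so their
intersection is the smallest one). -/
def lca (T : PhyloTree V) (x y : V) : Set V :=
  ⋂₀ {A | A ∈ T.clusters ∧ x ∈ A ∧ y ∈ A}

/-- The rooted triple `xy|z` (on three pairwise distinct leaves) is displayed by `T`:
`lca(x,y) ≺ lca(x,z) = lca(y,z)`. -/
def Displays (T : PhyloTree V) (x y z : V) : Prop :=
  x ≠ y ∧ x ≠ z ∧ y ≠ z ∧ T.lca x y ⊂ T.lca x z ∧ T.lca x z = T.lca y z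

/-- `T` displays every triple of `R`; a triple `(x, y, z)` encodes `xy|z`. -/
def DisplaysSet (T : PhyloTree V) (R : Set (V × V × V)) : Prop :=
  ∀ t ∈ R, T.Displays t.1 t.2.1 t.2.2

/-- `r(T)`, the set of triples displayed by `T`. -/
def triples (T : PhyloTree V) : Set (V × V × V) :=
  {t | T.Displays t.1 t.2.1 t.2.2}

/-- `T` is binary: every inner vertex (cluster with at least two leaves) has exactly
two children, i.e. splits into two disjoint proper subclusters. -/
def IsBinary (T : PhyloTree V) : Prop :=
  ∀ A ∈ T.clusters, 1 < A.ncard →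
    ∃ B ∈ T.clusters, ∃ D ∈ T.clusters,
      Disjoint B D ∧ B ∪ D = A ∧ B ⊂ A ∧ D ⊂ A

/-- `T'` is a refinement of `T`: they have the same leaf set and `T` is obtained from
`T'` by contracting inner edges, i.e. every cluster of `T` is a cluster of `T'`. -/
def Refines (T' T : PhyloTree V) : Prop :=
  T.clusters ⊆ T'.clusters

end PhyloTree

section BMG

variable {V C : Type*}

/-- `y` is a best match of `x` in the leaf-colored tree `(T,σ)`. -/
def bestMatch (T : PhyloTree V) (σ : V → C) (x y : V) : Prop :=
  σ x ≠ σ y ∧ ∀ y' : V, σ y' = σ y → T.lca x y ⊆ T.lca x y'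

/-- The leaf-colored tree `(T,σ)` explains the vertex-colored digraph `(E,σ)`,
i.e. `(E,σ)` is the best match graph of `(T,σ)`. -/
def Explains (T : PhyloTree V) (σ : V → C) (E : V → V → Prop) : Prop :=
  ∀ x y, E x y ↔ bestMatch T σ x y

/-- `(E,σ)` is a best match graph. -/
def IsBMG (E : V → V → Prop) (σ : V → C) : Prop :=
  ∃ T : PhyloTree V, Explains T σ E

/-- `(E,σ)` is binary-explainable. -/
def BinaryExplainable (E : V → V → Prop) (σ : V → C) : Prop :=
  ∃ T : PhyloTree V, T.IsBinary ∧ Explains T σ E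

/-- The informative triples `R(G,σ)`: `(a,b,b')` encodes `ab|b'`. -/
def informativeTriples (E : V → V → Prop) (σ : V → C) : Set (V × V × V) :=
  {t | σ t.1 ≠ σ t.2.1 ∧ σ t.2.1 = σ t.2.2 ∧ E t.1 t.2.1 ∧ ¬ E t.1 t.2.2}

/-- The forbidden triples `F(G,σ)`: `(a,b,b')` encodes `ab|b'`. -/
def forbiddenTriples (E : V → V → Prop) (σ : V → C) : Set (V × V × V) :=
  {t | σ t.1 ≠ σ t.2.1 ∧ σ t.2.1 = σ t.2.2 ∧ t.2.1 ≠ t.2.2 ∧ E t.1 t.2.1 ∧ E t.1 t.2.2}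

/-- The extended triple set `R^bin(G,σ) = R(G,σ) ∪ {bb'|a : ab|b' ∈ F(G,σ)}`. -/
def Rbin (E : V → V → Prop) (σ : V → C) : Set (V × V × V) :=
  informativeTriples E σ ∪ {t | (t.2.2, t.1, t.2.1) ∈ forbiddenTriples E σ}

/-- Properly colored: arcs only between vertices of distinct colors. -/
def ProperlyColored (E : V → V → Prop) (σ : V → C) : Prop :=
  ∀ x y, E x y → σ x ≠ σ y

/-- sf-colored: properly colored and every vertex has, for each color (of the graph)
different from its own, at least one out-neighbor of that color. -/
def SfColored (E : V → V → Prop) (σ : V → C) : Prop :=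
  ProperlyColored E σ ∧ ∀ x y : V, σ y ≠ σ x → ∃ z, E x z ∧ σ z = σ y

/-- A triple set is consistent if some tree displays all of its triples. -/
def Consistent (R : Set (V × V × V)) : Prop :=
  ∃ T : PhyloTree V, T.DisplaysSet R

/-- The closure `cl(R)`: all triples displayed by every tree displaying `R`. -/
def tripleClosure (R : Set (V × V × V)) : Set (V × V × V) :=
  {t | ∀ T : PhyloTree V, T.DisplaysSet R → T.Displays t.1 t.2.1 t.2.2}

/-- `(T,σ)` is a least resolved tree for `(E,σ)`: it explains `(E,σ)` and no tree
obtained from it by contracting an edge (i.e. by removing a non-root inner cluster)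
explains `(E,σ)`. -/
def IsLRT (T : PhyloTree V) (σ : V → C) (E : V → V → Prop) : Prop :=
  Explains T σ E ∧
    ∀ A ∈ T.clusters, A ≠ Set.univ → 1 < A.ncard →
      ∀ T' : PhyloTree V, T'.clusters = T.clusters \ {A} → ¬ Explains T' σ E

end BMG

section Aho

variable {V : Type*}

/-- Adjacency in the Aho graph `[R,L]`: `x` and `y` are joined whenever `xy|z ∈ R`
for some `z ∈ L` (only triples with all leaves in `L` are taken into account). -/
def ahoAdj (R : Set (V × V × V)) (L : Set V) (x y : V) : Prop :=
  x ∈ L ∧ y ∈ L ∧ ∃ z ∈ L, (x, y, z) ∈ R ∨ (y, x, z) ∈ R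

/-- The vertex set of the connected component of `x` in the Aho graph `[R,L]`. -/
def ahoComponent (R : Set (V × V × V)) (L : Set V) (x : V) : Set V :=
  {y | Relation.ReflTransGen (ahoAdj R L) x y}

/-- The clusters of the Aho tree `Aho(R, V)`: the full leaf set, and recursively the
connected components of the Aho graphs. -/
inductive IsAhoCluster (R : Set (V × V × V)) : Set V → Prop
  | univ : IsAhoCluster R Set.univ
  | component {L : Set V} {x : V} :
      IsAhoCluster R L → x ∈ L → IsAhoCluster R (ahoComponent R L x)

/-- `T` is the Aho tree (`BUILD` tree) of the triple set `R` on the full leaf set. -/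
def IsAhoTree (R : Set (V × V × V)) (T : PhyloTree V) : Prop :=
  T.clusters = {A | IsAhoCluster R A}

/-- The union of the leaf sets of the triples in `R`. -/
def tripleLeaves (R : Set (V × V × V)) : Set V :=
  {v | ∃ t ∈ R, v = t.1 ∨ v = t.2.1 ∨ v = t.2.2}

end Aho

/-! In a tree explaining `(G,σ)`, an informative triple `ab|b'` is displayed because
`lca(a,b) ⊊ lca(a,b')`. For a forbidden triple `ab|b'` both `b` and `b'` are best matches of
`a`, so `lca(a,b) = lca(a,b')`; in a binary tree `a` lies in one child of this vertex and
`b, b'` in the other, whence `bb'|a` is displayed. Conversely, if `(G,σ)` is sf-colored, every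
tree displaying `R^bin(G,σ)` explains it, and so does any binary refinement, since refining
preserves displayed triples. A binary refinement exists: in a maximal hierarchy containing the
clusters of `T`, a cluster `A` with a maximal proper subcluster `B` also has `A \ B` as a
cluster, because `A \ B` is compatible with every cluster. -/

theorem Set.Finite.exists_isLeast_of_isChain {α : Type*} [PartialOrder α] {s : Set α}
    (hs : s.Finite) (hne : s.Nonempty) (hc : IsChain (· ≤ ·) s) : ∃ a, IsLeast s a := by
  obtain ⟨a, ha⟩ := hs.exists_minimal hne
  exact ⟨a, ha.1, fun b hb => (hc.total ha.1 hb).elim id (ha.2 hb)⟩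

namespace PhyloTree

variable {V : Type*} (T : PhyloTree V)

theorem subset_or_subset_of_mem {A B : Set V} (hA : A ∈ T.clusters) (hB : B ∈ T.clusters)
    {x : V} (hxA : x ∈ A) (hxB : x ∈ B) : A ⊆ B ∨ B ⊆ A := by
  rcases T.nested A hA B hB with h | h | h
  · exact Or.inl h
  · exact Or.inr h
  · exact absurd hxB (Set.disjoint_left.mp h hxA)

theorem mem_lca_left (x y : V) : x ∈ T.lca x y := Set.mem_sInter.mpr fun _ hA => hA.2.1

theorem mem_lca_right (x y : V) : y ∈ T.lca x y := Set.mem_sInter.mpr fun _ hA => hA.2.2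

theorem lca_subset {A : Set V} (hA : A ∈ T.clusters) {x y : V} (hx : x ∈ A) (hy : y ∈ A) :
    T.lca x y ⊆ A :=
  Set.sInter_subset_of_mem ⟨hA, hx, hy⟩

theorem lca_comm (x y : V) : T.lca x y = T.lca y x :=
  congrArg _ (Set.ext fun _ => and_congr_right fun _ => and_comm)

theorem lca_subset_lca_of_refines {T' : PhyloTree V} (href : T'.Refines T) (x y : V) :
    T'.lca x y ⊆ T.lca x y :=
  Set.subset_sInter fun _ hA => Set.sInter_subset_of_mem ⟨href hA.1, hA.2⟩

variable {T} in
theorem IsBinary.exists_split_of_mem (hbin : T.IsBinary) {A : Set V} (hA : A ∈ T.clusters)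
    (hcard : 1 < A.ncard) {a : V} (ha : a ∈ A) :
    ∃ B ∈ T.clusters, ∃ D ∈ T.clusters,
      Disjoint B D ∧ B ∪ D = A ∧ B ⊂ A ∧ D ⊂ A ∧ a ∈ B := by
  obtain ⟨B, hB, D, hD, hdisj, hunion, hBA, hDA⟩ := hbin A hA hcard
  rcases (hunion ▸ ha : a ∈ B ∪ D) with haB | haD
  · exact ⟨B, hB, D, hD, hdisj, hunion, hBA, hDA, haB⟩
  · exact ⟨D, hD, B, hB, hdisj.symm, Set.union_comm B D ▸ hunion, hDA, hBA, haD⟩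

def Compatible (D : Set V) : Prop :=
  ∀ A ∈ T.clusters, A ⊆ D ∨ D ⊆ A ∨ Disjoint A D

def insertCluster (D : Set V) (hD : D.Nonempty) (hc : T.Compatible D) : PhyloTree V where
  clusters := insert D T.clusters
  nonempty_of_mem := by
    rintro A (rfl | hA)
    exacts [hD, T.nonempty_of_mem A hA]
  univ_mem := Set.mem_insert_of_mem _ T.univ_mem
  singleton_mem v := Set.mem_insert_of_mem _ (T.singleton_mem v)
  nested := by
    rintro A (rfl | hA) B (rfl | hB)
    · exact Or.inl subset_rfl
    · rcases hc B hB with h | h | h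
      exacts [Or.inr (Or.inl h), Or.inl h, Or.inr (Or.inr h.symm)]
    · exact hc A hA
    · exact T.nested A hA B hB

theorem compatible_sdiff_of_maximal {A B : Set V} {a : V} (hA : A ∈ T.clusters)
    (hB : Maximal (fun X => X ∈ T.clusters ∧ a ∈ X ∧ X ⊂ A) B) : T.Compatible (A \ B) := by
  intro X hX
  rcases T.nested X hX A hA with hXA | hAX | hXA
  · rcases eq_or_ne X A with rfl | hne
    · exact Or.inr (Or.inl Set.sdiff_subset)
    have hXA' : X ⊂ A := hXA.ssubset_of_ne hne
    rcases T.nested X hX B hB.1.1 with hXB | hBX | hXB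
    · exact Or.inr (Or.inr (Set.disjoint_sdiff_right.mono_left hXB))
    · have hXB : X ⊆ B := hB.2 ⟨hX, hBX hB.1.2.1, hXA'⟩ hBX
      exact Or.inr (Or.inr (Set.disjoint_sdiff_right.mono_left hXB))
    · exact Or.inl (Set.subset_sdiff.mpr ⟨hXA, hXB⟩)
  · exact Or.inr (Or.inl (Set.sdiff_subset.trans hAX))
  · exact Or.inr (Or.inr (hXA.mono_right Set.sdiff_subset))

variable [Finite V]

theorem lca_mem_clusters (x y : V) : T.lca x y ∈ T.clusters := by
  set S : Set (Set V) := {A | A ∈ T.clusters ∧ x ∈ A ∧ y ∈ A}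
  have hchain : IsChain (· ≤ ·) S := fun A hA B hB _ =>
    T.subset_or_subset_of_mem hA.1 hB.1 hA.2.1 hB.2.1
  obtain ⟨M, hM⟩ := (Set.toFinite S).exists_isLeast_of_isChain
    ⟨Set.univ, T.univ_mem, trivial, trivial⟩ hchain
  have hlca : T.lca x y = M := hM.isGLB.sInf_eq
  exact hlca ▸ hM.1.1

theorem lca_subset_or_subset (x y z : V) : T.lca x y ⊆ T.lca x z ∨ T.lca x z ⊆ T.lca x y :=
  T.subset_or_subset_of_mem (T.lca_mem_clusters x y) (T.lca_mem_clusters x z)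
    (T.mem_lca_left x y) (T.mem_lca_left x z)

theorem lca_ssubset_of_notMem {x y z : V} (hz : z ∉ T.lca x y) : T.lca x y ⊂ T.lca x z := by
  rcases T.lca_subset_or_subset x y z with h | h
  · exact h.ssubset_of_not_subset fun h' => hz (h' (T.mem_lca_right x z))
  · exact absurd (h (T.mem_lca_right x z)) hz

theorem lca_eq_of_notMem {x y z : V} (hz : z ∉ T.lca x y) : T.lca x z = T.lca y z := by
  have hy : y ∈ T.lca x z := (T.lca_ssubset_of_notMem hz).subset (T.mem_lca_right x y)
  have hx : x ∈ T.lca y z := by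
    rw [T.lca_comm x y] at hz
    exact (T.lca_ssubset_of_notMem hz).subset (T.mem_lca_right y x)
  exact subset_antisymm (T.lca_subset (T.lca_mem_clusters y z) hx (T.mem_lca_right y z))
    (T.lca_subset (T.lca_mem_clusters x z) hy (T.mem_lca_right x z))

theorem displays_iff {x y z : V} (hxy : x ≠ y) (hxz : x ≠ z) (hyz : y ≠ z) :
    T.Displays x y z ↔ z ∉ T.lca x y := by
  refine ⟨fun hd hz => ?_, fun hz =>
    ⟨hxy, hxz, hyz, T.lca_ssubset_of_notMem hz, T.lca_eq_of_notMem hz⟩⟩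
  exact hd.2.2.2.1.not_subset
    (T.lca_subset (T.lca_mem_clusters x y) (T.mem_lca_left x y) hz)

variable {T} in
theorem Displays.of_refines {T' : PhyloTree V} (href : T'.Refines T) {x y z : V}
    (hd : T.Displays x y z) : T'.Displays x y z := by
  have hz := (T.displays_iff hd.1 hd.2.1 hd.2.2.1).mp hd
  exact (T'.displays_iff hd.1 hd.2.1 hd.2.2.1).mpr fun h =>
    hz (T.lca_subset_lca_of_refines href x y h)

theorem isBinary_of_forall_compatible
    (hsat : ∀ D : Set V, D.Nonempty → T.Compatible D → D ∈ T.clusters) : T.IsBinary := by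
  intro A hA hcard
  obtain ⟨a, b, ha, hb, hab⟩ := (Set.one_lt_ncard_iff (Set.toFinite A)).mp hcard
  have hsingleton : {a} ⊂ A := Set.ssubset_iff_exists.mpr
    ⟨Set.singleton_subset_iff.mpr ha, b, hb, Ne.symm hab⟩
  obtain ⟨B, hB⟩ := (Set.toFinite {X | X ∈ T.clusters ∧ a ∈ X ∧ X ⊂ A}).exists_maximal
    ⟨{a}, T.singleton_mem a, rfl, hsingleton⟩
  obtain ⟨hBT, haB, hBA⟩ := hB.1
  have hD : A \ B ∈ T.clusters := hsat _ (Set.sdiff_nonempty.mpr hBA.not_subset)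
    (T.compatible_sdiff_of_maximal hA hB)
  exact ⟨B, hBT, A \ B, hD, Set.disjoint_sdiff_right, Set.union_sdiff_cancel hBA.subset,
    hBA, Set.sdiff_subset.ssubset_of_not_subset fun h => (h ha).2 haB⟩

theorem exists_refines_forall_compatible :
    ∃ T' : PhyloTree V, T'.Refines T ∧ ∀ D : Set V, D.Nonempty → T'.Compatible D →
      D ∈ T'.clusters := by
  obtain ⟨F, hF⟩ := Set.Finite.exists_maximal
    (Set.toFinite {F | ∃ T' : PhyloTree V, T'.Refines T ∧ T'.clusters = F})
    ⟨T.clusters, T, subset_rfl, rfl⟩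
  obtain ⟨T', href, rfl⟩ := hF.1
  refine ⟨T', href, fun D hD hc => ?_⟩
  have hmax := hF.2 ⟨T'.insertCluster D hD hc, href.trans (Set.subset_insert _ _), rfl⟩
    (Set.subset_insert _ _)
  exact hmax (Set.mem_insert D _)

theorem exists_isBinary_refines : ∃ T' : PhyloTree V, T'.IsBinary ∧ T'.Refines T := by
  obtain ⟨T', href, hsat⟩ := T.exists_refines_forall_compatible
  exact ⟨T', T'.isBinary_of_forall_compatible hsat, href⟩

end PhyloTree

section BestMatch

variable {V C : Type*} {E : V → V → Prop} {σ : V → C} {T : PhyloTree V}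

theorem explains_of_displaysSet_rbin (hsf : SfColored E σ) (hT : T.DisplaysSet (Rbin E σ)) :
    Explains T σ E := by
  intro x y
  constructor
  · intro hxy
    refine ⟨hsf.1 x y hxy, fun y' hy' => ?_⟩
    rcases eq_or_ne y y' with rfl | hne
    · exact subset_rfl
    by_cases hxy' : E x y'
    · have hF : ((y, y', x) : V × V × V) ∈ Rbin E σ :=
        Or.inr ⟨hsf.1 x y hxy, hy'.symm, hne, hxy, hxy'⟩
      rw [T.lca_comm x y, (hT _ hF).2.2.2.2, T.lca_comm y' x]
    · have hR : ((x, y, y') : V × V × V) ∈ Rbin E σ :=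
        Or.inl ⟨hsf.1 x y hxy, hy'.symm, hxy, hxy'⟩
      exact (hT _ hR).2.2.2.1.subset
  · rintro ⟨hσ, hbest⟩
    obtain ⟨z, hxz, hz⟩ := hsf.2 x y (Ne.symm hσ)
    by_contra hxy
    have hR : ((x, z, y) : V × V × V) ∈ Rbin E σ :=
      Or.inl ⟨hz ▸ hσ, hz, hxz, hxy⟩
    exact (hT _ hR).2.2.2.1.not_subset (hbest z hz)

variable [Finite V]

theorem sfColored_of_explains (hex : Explains T σ E) : SfColored E σ := by
  refine ⟨fun x y h => ((hex x y).mp h).1, fun x y hσ => ?_⟩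
  have hchain : IsChain (· ≤ ·) (T.lca x '' {y' | σ y' = σ y}) := by
    rintro _ ⟨y₁, -, rfl⟩ _ ⟨y₂, -, rfl⟩ -
    exact T.lca_subset_or_subset x y₁ y₂
  have hne : (T.lca x '' {y' | σ y' = σ y}).Nonempty := ⟨_, y, rfl, rfl⟩
  obtain ⟨_, ⟨y₀, hy₀, rfl⟩, hleast⟩ := (Set.toFinite _).exists_isLeast_of_isChain hne hchain
  refine ⟨y₀, (hex x y₀).mpr ⟨hy₀ ▸ hσ.symm, fun y' hy' => ?_⟩, hy₀⟩
  exact hleast ⟨y', hy'.trans hy₀, rfl⟩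

theorem displays_of_mem_informativeTriples (hex : Explains T σ E) {a b b' : V}
    (ht : (a, b, b') ∈ informativeTriples E σ) : T.Displays a b b' := by
  obtain ⟨hab, hbb', hE, hnE⟩ : σ a ≠ σ b ∧ σ b = σ b' ∧ E a b ∧ ¬E a b' := ht
  have hbest := ((hex a b).mp hE).2
  have hab' : a ≠ b' := fun h => hab (h ▸ hbb'.symm)
  refine (T.displays_iff (fun h => hab (congrArg σ h)) hab' (fun h => hnE (h ▸ hE))).mpr
    fun hb' => hnE ((hex a b').mpr ⟨hbb' ▸ hab, fun y hy => ?_⟩)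
  calc T.lca a b'
      ⊆ T.lca a b := T.lca_subset (T.lca_mem_clusters a b) (T.mem_lca_left a b) hb'
    _ ⊆ T.lca a y := hbest y (hy.trans hbb'.symm)

theorem displays_of_mem_forbiddenTriples (hbin : T.IsBinary) (hex : Explains T σ E)
    {a b b' : V} (ht : (a, b, b') ∈ forbiddenTriples E σ) : T.Displays b b' a := by
  obtain ⟨hab, hbb', hne, hE, hE'⟩ :
    σ a ≠ σ b ∧ σ b = σ b' ∧ b ≠ b' ∧ E a b ∧ E a b' := ht
  have hba : b ≠ a := fun h => hab (congrArg σ h.symm)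
  have hb'a : b' ≠ a := fun h => hab (by rw [← h, hbb'])
  have hlca : T.lca a b' = T.lca a b :=
    subset_antisymm (((hex a b').mp hE').2 b hbb') (((hex a b).mp hE).2 b' hbb'.symm)
  have hcard : 1 < (T.lca a b).ncard := (Set.one_lt_ncard_iff (Set.toFinite _)).mpr
    ⟨a, b, T.mem_lca_left a b, T.mem_lca_right a b, hba.symm⟩
  obtain ⟨B, hB, D, hD, hdisj, hunion, hBA, -, haB⟩ :=
    hbin.exists_split_of_mem (T.lca_mem_clusters a b) hcard (T.mem_lca_left a b)
  have hmemD : ∀ y, T.lca a y = T.lca a b → y ∈ D := by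
    intro y hy
    have hyB : y ∉ B := fun h => hBA.not_subset (hy ▸ T.lca_subset hB haB h)
    exact ((hunion ▸ hy ▸ T.mem_lca_right a y : y ∈ B ∪ D)).resolve_left hyB
  refine (T.displays_iff hne hba hb'a).mpr fun ha => ?_
  exact Set.disjoint_left.mp hdisj haB (T.lca_subset hD (hmemD b rfl) (hmemD b' hlca) ha)

theorem displaysSet_rbin_of_explains (hbin : T.IsBinary) (hex : Explains T σ E) :
    T.DisplaysSet (Rbin E σ) := by
  rintro ⟨a, b, c⟩ (ht | ht)
  · exact displays_of_mem_informativeTriples hex ht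
  · exact displays_of_mem_forbiddenTriples hbin hex ht

end BestMatch

theorem stmt3_general {V C : Type*} [Fintype V] (E : V → V → Prop) (σ : V → C) :
    BinaryExplainable E σ ↔ SfColored E σ ∧ Consistent (Rbin E σ) := by
  constructor
  · rintro ⟨T, hbin, hex⟩
    exact ⟨sfColored_of_explains hex, T, displaysSet_rbin_of_explains hbin hex⟩
  · rintro ⟨hsf, T, hT⟩
    obtain ⟨T', hbin, href⟩ := T.exists_isBinary_refines
    exact ⟨T', hbin, explains_of_displaysSet_rbin hsf fun t ht => (hT t ht).of_refines href⟩

/-- Theorem: Rbin-MAIN.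
A properly vertex-colored digraph `(G,σ)` is binary-explainable if and only if
(i) `(G,σ)` is sf-colored and (ii) the extended triple set `R^bin(G,σ)` is consistent. -/
theorem stmt3 {V C : Type*} [Fintype V] (E : V → V → Prop) (σ : V → C)
    (hproper : ProperlyColored E σ) :
    BinaryExplainable E σ ↔ SfColored E σ ∧ Consistent (Rbin E σ) :=
  stmt3_general E σ
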